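/- arXiv:2308.01811 — 4 statements merged into one kernel-verified Lean document; each statement's English description precedes it below -/
import Mathlib

section
/- For any Gauss diagram G, the derivative of the writhe polynomial W_G(t) = ∑_c w(c)·t^{Ind(c)} − ∑_c w(c) vanishes at t = 1, i.e. W_G'(1) = ∑_c w(c)·Ind(c) = 0. -/
open Finset LaurentPolynomial

/-- A Gauss diagram, abstracted as a finite set of signed chords together with the
asymmetric relation `ltr d c` : "chord `d` crosses chord `c` from left to right"
(so `ltr c d` means `d` crosses `c` from right to left). -/
structure GaussDiagram where
  Chord : Type
  [instFintype : Fintype Chord]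
  [instDecEq : DecidableEq Chord]
  w : Chord → ℤ
  sign : ∀ c, w c = 1 ∨ w c = -1
  ltr : Chord → Chord → Prop
  [instDecRel : DecidableRel ltr]
  irrefl : ∀ c, ¬ ltr c c
  asymm : ∀ c d, ltr c d → ¬ ltr d c

attribute [instance] GaussDiagram.instFintype GaussDiagram.instDecEq GaussDiagram.instDecRel

/-- The chord index `Ind c = r₊(c) − r₋(c) − l₊(c) + l₋(c)`. -/
def GaussDiagram.Ind (G : GaussDiagram) (c : G.Chord) : ℤ :=
  (∑ d ∈ univ.filter (fun d => G.ltr d c), G.w d)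
    - (∑ d ∈ univ.filter (fun d => G.ltr c d), G.w d)

/-- The writhe polynomial `W_G(t) = ∑_c w(c) t^{Ind(c)} − ∑_c w(c)`. -/
noncomputable def GaussDiagram.W (G : GaussDiagram) : LaurentPolynomial ℤ :=
  (∑ c, C (G.w c) * T (G.Ind c)) - C (∑ c, G.w c)

/-- Evaluation of a Laurent polynomial at `t = 1` (the sum of its coefficients). -/
def evalOne (f : LaurentPolynomial ℤ) : ℤ := f.coeff.sum fun _ a => a

/-- Evaluation of the formal derivative of a Laurent polynomial at `t = 1`. -/
def derivOne (f : LaurentPolynomial ℤ) : ℤ := f.coeff.sum fun n a => n * a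

theorem derivOne_C_mul_T (a n : ℤ) : derivOne (C a * T n) = n * a := by
  rw [← single_eq_C_mul_T]
  exact Finsupp.sum_single_index (mul_zero _)

theorem derivOne_C (a : ℤ) : derivOne (C a) = 0 := by
  simpa using derivOne_C_mul_T a 0

@[simps]
noncomputable def derivOneHom : LaurentPolynomial ℤ →+ ℤ where
  toFun := derivOne
  map_zero' := Finsupp.sum_zero_index
  map_add' _ _ := Finsupp.sum_add_index' (fun _ => mul_zero _) fun _ => mul_add _

theorem derivOne_sum_C_mul_T {ι : Type*} (s : Finset ι) (a n : ι → ℤ) :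
    derivOne (∑ i ∈ s, C (a i) * T (n i)) = ∑ i ∈ s, n i * a i := by
  rw [← derivOneHom_apply, map_sum]
  exact sum_congr rfl fun i _ => derivOne_C_mul_T (a i) (n i)

/-- Each ordered pair `(c, d)` with `r d c` contributes `w c * w d` once to the first sum and
once, as `(d, c)`, to the second. -/
theorem sum_mul_sum_filter_sub_sum_filter_eq_zero {ι R : Type*} [Fintype ι] [CommRing R]
    (r : ι → ι → Prop) [DecidableRel r] (w : ι → R) :
    ∑ c, w c * (∑ d ∈ univ.filter (r · c), w d - ∑ d ∈ univ.filter (r c ·), w d) = 0 := by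
  simp only [mul_sub, mul_sum, sum_sub_distrib, sum_filter, mul_ite, mul_zero]
  rw [sub_eq_zero, sum_comm]
  simp only [mul_comm]

namespace GaussDiagram

variable (G : GaussDiagram)

theorem derivOne_W : derivOne G.W = ∑ c, G.w c * G.Ind c := by
  rw [W, ← derivOneHom_apply, map_sub, derivOneHom_apply, derivOneHom_apply, derivOne_sum_C_mul_T,
    derivOne_C, sub_zero]
  simp only [mul_comm]

theorem sum_w_mul_Ind_eq_zero : ∑ c, G.w c * G.Ind c = 0 :=
  sum_mul_sum_filter_sub_sum_filter_eq_zero G.ltr G.w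

end GaussDiagram

/-- The formal derivative of the writhe polynomial vanishes at `t = 1`:
`W_G'(1) = ∑_c w(c)·Ind(c) = 0`. -/
theorem writhePolynomial_deriv_one (G : GaussDiagram) :
    derivOne G.W = ∑ c, G.w c * G.Ind c ∧ derivOne G.W = 0 :=
  ⟨G.derivOne_W, G.derivOne_W.trans G.sum_w_mul_Ind_eq_zero⟩
end

section
/- If a chord c in a Gauss diagram G is isolated (intersects no other chord), then Ind(c) = 0, and removing c from G leaves the index of every other chord unchanged; consequently the writhe polynomial of G equals that of G with c removed. -/
open Finset LaurentPolynomial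

/-- Deletion of a chord from a Gauss diagram. -/
def GaussDiagram.delete (G : GaussDiagram) (c : G.Chord) : GaussDiagram where
  Chord := {d : G.Chord // d ≠ c}
  w d := G.w d.val
  sign d := G.sign d.val
  ltr d e := G.ltr d.val e.val
  irrefl d := G.irrefl d.val
  asymm d e := G.asymm d.val e.val

namespace GaussDiagram

variable (G : GaussDiagram) (c : G.Chord)

def IsIsolated : Prop := ∀ d, ¬ G.ltr d c ∧ ¬ G.ltr c d

theorem add_sum_delete {M : Type*} [AddCommMonoid M] (f : G.Chord → M) :
    f c + ∑ d : (G.delete c).Chord, f d.val = ∑ d, f d :=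
  (Fintype.sum_eq_add_sum_subtype_ne f c).symm

theorem Ind_delete (d : (G.delete c).Chord) :
    (G.delete c).Ind d =
      G.Ind d.val + (if G.ltr d.val c then G.w c else 0)
        - (if G.ltr c d.val then G.w c else 0) := by
  simp only [Ind, sum_filter, ← G.add_sum_delete c]
  change (∑ e : (G.delete c).Chord, if G.ltr e.val d.val then G.w e.val else 0)
    - (∑ e : (G.delete c).Chord, if G.ltr d.val e.val then G.w e.val else 0) = _
  ring

variable {G c}

theorem IsIsolated.Ind_eq_zero (hc : G.IsIsolated c) : G.Ind c = 0 := by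
  simp [Ind, filter_eq_empty_iff.2 fun d _ => (hc d).1, filter_eq_empty_iff.2 fun d _ => (hc d).2]

theorem IsIsolated.Ind_delete (hc : G.IsIsolated c) (d : (G.delete c).Chord) :
    (G.delete c).Ind d = G.Ind d.val := by
  simp [G.Ind_delete, (hc d.val).1, (hc d.val).2]

theorem IsIsolated.W_delete (hc : G.IsIsolated c) : (G.delete c).W = G.W := by
  have hsum : ∑ d : (G.delete c).Chord, C ((G.delete c).w d) * T ((G.delete c).Ind d)
      = ∑ d : (G.delete c).Chord, C (G.w d.val) * T (G.Ind d.val) :=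
    sum_congr rfl fun d _ => by rw [hc.Ind_delete d]; rfl
  rw [W, W, hsum, ← G.add_sum_delete c, ← G.add_sum_delete c G.w,
    hc.Ind_eq_zero, T_zero, mul_one, map_add]
  simp only [delete]
  ring

end GaussDiagram

/-- If a chord `c` is isolated (intersects no other chord), then `Ind(c) = 0`, removing `c`
leaves the index of every other chord unchanged, and the writhe polynomial is unchanged. -/
theorem writhePolynomial_delete_isolated (G : GaussDiagram) (c : G.Chord)
    (hiso : ∀ d, ¬ G.ltr d c ∧ ¬ G.ltr c d) :
    G.Ind c = 0 ∧
    (∀ d : (G.delete c).Chord, (G.delete c).Ind d = G.Ind d.val) ∧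
    (G.delete c).W = G.W :=
  have hc : G.IsIsolated c := hiso
  ⟨hc.Ind_eq_zero, hc.Ind_delete, hc.W_delete⟩
end

section
/- Suppose a Gauss diagram G' is obtained from G by adding two parallel chords c₊, c₋ with opposite signs, adjacent endpoints (so that c₊ and c₋ do not intersect each other and every other chord intersects c₊ if and only if it intersects c₋, in the same direction). Then W_{G'}(t) = W_G(t): the writhe polynomial is invariant under the second Reidemeister move. -/
open Finset LaurentPolynomial

/-- Deletion of two chords from a Gauss diagram. -/
def GaussDiagram.delete2 (G : GaussDiagram) (c₁ c₂ : G.Chord) : GaussDiagram where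
  Chord := {d : G.Chord // d ≠ c₁ ∧ d ≠ c₂}
  w d := G.w d.val
  sign d := G.sign d.val
  ltr d e := G.ltr d.val e.val
  irrefl d := G.irrefl d.val
  asymm d e := G.asymm d.val e.val

/-!
With the intersection sign `ε(c, d) ∈ {1, -1, 0}`, the index is `Ind c = ∑_d ε(c, d) w(d)`.
Parallel chords have the same row `ε(c₊, ·) = ε(c₋, ·)`, hence the same index, so their terms
`±t^{Ind}` cancel; by antisymmetry of `ε` they also have the same column, so their contributions
`ε(d, c₊) w(c₊) + ε(d, c₋) w(c₋)` to the index of any other chord `d` cancel as well.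
-/

namespace GaussDiagram

variable (G : GaussDiagram)

def crossSign (c d : G.Chord) : ℤ :=
  if G.ltr d c then 1 else if G.ltr c d then -1 else 0

theorem crossSign_swap (c d : G.Chord) : G.crossSign d c = -G.crossSign c d := by
  unfold crossSign
  by_cases h : G.ltr d c
  · simp [h, G.asymm d c h]
  · by_cases h' : G.ltr c d <;> simp [h, h']

theorem Ind_eq_sum_crossSign (c : G.Chord) : G.Ind c = ∑ d, G.crossSign c d * G.w d := by
  rw [Ind, sum_filter, sum_filter, ← sum_sub_distrib]
  refine sum_congr rfl fun d _ => ?_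
  unfold crossSign
  by_cases h : G.ltr d c
  · simp [h, G.asymm d c h]
  · by_cases h' : G.ltr c d <;> simp [h, h']

def Parallel (c₁ c₂ : G.Chord) : Prop := G.crossSign c₁ = G.crossSign c₂

theorem parallel_of_ltr_iff {c₁ c₂ : G.Chord}
    (h₁₂ : ¬ G.ltr c₁ c₂) (h₂₁ : ¬ G.ltr c₂ c₁)
    (h : ∀ d, d ≠ c₁ → d ≠ c₂ → ((G.ltr d c₁ ↔ G.ltr d c₂) ∧ (G.ltr c₁ d ↔ G.ltr c₂ d))) :
    G.Parallel c₁ c₂ := by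
  funext d
  unfold crossSign
  by_cases hd₁ : d = c₁
  · subst hd₁; simp [G.irrefl, h₁₂, h₂₁]
  by_cases hd₂ : d = c₂
  · subst hd₂; simp [G.irrefl, h₁₂, h₂₁]
  obtain ⟨hl, hr⟩ := h d hd₁ hd₂
  simp only [hl, hr]

theorem Parallel.crossSign_eq {c₁ c₂ : G.Chord} (h : G.Parallel c₁ c₂) (d : G.Chord) :
    G.crossSign c₁ d = G.crossSign c₂ d :=
  congrFun h d

theorem Ind_eq_of_parallel {c₁ c₂ : G.Chord} (h : G.Parallel c₁ c₂) : G.Ind c₁ = G.Ind c₂ := by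
  simp only [Ind_eq_sum_crossSign, h.crossSign_eq]

theorem sum_eq_sum_delete2_add {M : Type*} [AddCommMonoid M] {c₁ c₂ : G.Chord} (hne : c₁ ≠ c₂)
    (F : G.Chord → M) :
    ∑ d, F d = ∑ d : (G.delete2 c₁ c₂).Chord, F d.val + (F c₁ + F c₂) := by
  have hcompl : univ.filter (fun d => ¬(d ≠ c₁ ∧ d ≠ c₂)) = {c₁, c₂} := by
    ext d
    simp only [mem_filter, mem_univ, true_and, not_and_or, not_not, mem_insert, mem_singleton]
  rw [← sum_filter_add_sum_filter_not univ (fun d => d ≠ c₁ ∧ d ≠ c₂), hcompl, sum_pair hne,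
    sum_subtype (p := fun d => d ≠ c₁ ∧ d ≠ c₂) _ (by simp) F]
  rfl

variable {G} {c₁ c₂ : G.Chord}

theorem sum_w_delete2 (hne : c₁ ≠ c₂) (hw : G.w c₁ = -G.w c₂) :
    ∑ d : (G.delete2 c₁ c₂).Chord, (G.delete2 c₁ c₂).w d = ∑ d, G.w d := by
  rw [G.sum_eq_sum_delete2_add hne G.w, hw, neg_add_cancel, add_zero]
  rfl

theorem Ind_delete2 (hne : c₁ ≠ c₂) (hw : G.w c₁ = -G.w c₂) (hpar : G.Parallel c₁ c₂)
    (d : (G.delete2 c₁ c₂).Chord) : (G.delete2 c₁ c₂).Ind d = G.Ind d.val := by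
  have hcancel : G.crossSign d.val c₁ * G.w c₁ + G.crossSign d.val c₂ * G.w c₂ = 0 := by
    rw [G.crossSign_swap c₁, G.crossSign_swap c₂, hpar.crossSign_eq, hw]
    ring
  rw [Ind_eq_sum_crossSign, Ind_eq_sum_crossSign, G.sum_eq_sum_delete2_add hne, hcancel, add_zero]
  rfl

theorem writhe_terms_cancel (hw : G.w c₁ = -G.w c₂) (hpar : G.Parallel c₁ c₂) :
    C (G.w c₁) * T (G.Ind c₁) + C (G.w c₂) * T (G.Ind c₂) = 0 := by
  rw [G.Ind_eq_of_parallel hpar, hw, map_neg, neg_mul, neg_add_cancel]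

theorem W_delete2 (hne : c₁ ≠ c₂) (hw : G.w c₁ = -G.w c₂) (hpar : G.Parallel c₁ c₂) :
    (G.delete2 c₁ c₂).W = G.W := by
  rw [W, W, sum_w_delete2 hne hw,
    G.sum_eq_sum_delete2_add hne (fun c => C (G.w c) * T (G.Ind c)),
    writhe_terms_cancel hw hpar, add_zero]
  congr 2
  funext d
  rw [Ind_delete2 hne hw hpar]
  rfl

end GaussDiagram

/-- Second Reidemeister move: if `G'` contains two parallel chords `cp`, `cm` with opposite
signs and adjacent endpoints (so they do not intersect each other and every other chord
intersects `cp` iff it intersects `cm`, in the same direction), then their contributions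
cancel, the indices of all other chords are unchanged, the writhe is unchanged, and
the writhe polynomial of `G'` equals that of `G'` with `cp, cm` removed. -/
theorem writhePolynomial_reidemeister_two (G' : GaussDiagram) (cp cm : G'.Chord)
    (hne : cp ≠ cm) (hsign : G'.w cp = - G'.w cm)
    (hcross1 : ¬ G'.ltr cp cm) (hcross2 : ¬ G'.ltr cm cp)
    (hpar : ∀ d, d ≠ cp → d ≠ cm →
      ((G'.ltr d cp ↔ G'.ltr d cm) ∧ (G'.ltr cp d ↔ G'.ltr cm d))) :
    C (G'.w cp) * T (G'.Ind cp) + C (G'.w cm) * T (G'.Ind cm) = 0 ∧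
    (∀ d : (G'.delete2 cp cm).Chord, (G'.delete2 cp cm).Ind d = G'.Ind d.val) ∧
    (∑ d : (G'.delete2 cp cm).Chord, (G'.delete2 cp cm).w d = ∑ d, G'.w d) ∧
    (G'.delete2 cp cm).W = G'.W := by
  have hparallel := G'.parallel_of_ltr_iff hcross1 hcross2 hpar
  exact ⟨GaussDiagram.writhe_terms_cancel hsign hparallel,
    GaussDiagram.Ind_delete2 hne hsign hparallel,
    GaussDiagram.sum_w_delete2 hne hsign,
    GaussDiagram.W_delete2 hne hsign hparallel⟩
end

section
/- Let Γ be a finite signed directed multigraph containing two vertices v₊, v₋ with w(v₊) = +1, w(v₋) = −1, not joined to each other, such that there is a bijection between the edges incident to v₊ and those incident to v₋ preserving the other endpoint and the direction (toward/away). Let Γ' be Γ with v₊, v₋ and all their incident edges deleted. Then P_{Γ'}(t) = P_Γ(t), where P_Γ(t) = ∑_v w(v) t^{Ind(v)} − ∑_v w(v). -/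
open Finset LaurentPolynomial

/-- A finite directed multigraph with vertex signs `w : V → {+1, −1}`. -/
structure SDGraph where
  V : Type
  [instFintypeV : Fintype V]
  [instDecEqV : DecidableEq V]
  E : Type
  [instFintypeE : Fintype E]
  src : E → V
  tgt : E → V
  w : V → ℤ
  sign : ∀ v, w v = 1 ∨ w v = -1

attribute [instance] SDGraph.instFintypeV SDGraph.instDecEqV SDGraph.instFintypeE

/-- The index of a vertex:
`Ind(v) = ∑_{edges u→v} w(u) − ∑_{edges v→u} w(u)` (sums over edges, with multiplicity). -/
def SDGraph.Ind (G : SDGraph) (v : G.V) : ℤ :=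
  (∑ e ∈ univ.filter (fun e => G.tgt e = v), G.w (G.src e))
    - (∑ e ∈ univ.filter (fun e => G.src e = v), G.w (G.tgt e))

/-- The graph polynomial `P_Γ(t) = ∑_v w(v) t^{Ind(v)} − ∑_v w(v)`. -/
noncomputable def SDGraph.P (G : SDGraph) : LaurentPolynomial ℤ :=
  (∑ v, C (G.w v) * T (G.Ind v)) - C (∑ v, G.w v)

/-- Deleting two vertices and all edges incident to them. -/
def SDGraph.deletePair (G : SDGraph) (a b : G.V) : SDGraph where
  V := {u : G.V // u ≠ a ∧ u ≠ b}
  E := {e : G.E // G.src e ≠ a ∧ G.src e ≠ b ∧ G.tgt e ≠ a ∧ G.tgt e ≠ b}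
  src e := ⟨G.src e.val, e.prop.1, e.prop.2.1⟩
  tgt e := ⟨G.tgt e.val, e.prop.2.2.1, e.prop.2.2.2⟩
  w u := G.w u.val
  sign u := G.sign u.val

/-- The edges incident to a vertex. -/
def SDGraph.Inc (G : SDGraph) (v : G.V) : Type := {e : G.E // G.src e = v ∨ G.tgt e = v}

/-!
Writing `Ind(v) = ∑_u w(u) (m(u,v) - m(v,u))` with `m(a,b)` the number of edges `a → b`, the
hypotheses imply that `v₊` and `v₋` have the same edge multiplicities `m` to and from every
vertex. Hence `Ind(v₊) = Ind(v₋)`, and since `w(v₊) + w(v₋) = 0` both the terms of `v₊, v₋` in `P`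
and their contributions to the indices of the other vertices cancel.
-/

theorem Finset.card_filter_eq_of_subtypeEquiv {α β : Type*} [Fintype α] [Fintype β]
    {p : α → Prop} {q : β → Prop} {A : α → Prop} {B : β → Prop}
    [DecidablePred A] [DecidablePred B] (φ : Subtype p ≃ Subtype q)
    (hA : ∀ a, A a → p a) (hB : ∀ b, B b → q b) (h : ∀ x, A x.1 ↔ B (φ x).1) :
    #{a | A a} = #{b | B b} := by
  rw [← Fintype.card_subtype, ← Fintype.card_subtype]
  exact Fintype.card_congr <| (Equiv.subtypeSubtypeEquivSubtype (hA _)).symm.trans <|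
    (φ.subtypeEquiv h).trans (Equiv.subtypeSubtypeEquivSubtype (hB _))

theorem Fintype.sum_eq_add_add_sum_subtype_ne {V M : Type*} [Fintype V] [DecidableEq V]
    [AddCommMonoid M] {a b : V} (hab : a ≠ b) (f : V → M) :
    ∑ v, f v = f a + f b + ∑ v : {v // v ≠ a ∧ v ≠ b}, f v := by
  rw [← Finset.sum_subtype ((univ.erase a).erase b) (by simp [and_comm]), add_assoc,
    Finset.add_sum_erase _ _ (by simpa using hab.symm), Finset.add_sum_erase _ _ (mem_univ a)]

namespace SDGraph

variable (G : SDGraph)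

def mult (a b : G.V) : ℕ := #{e | G.src e = a ∧ G.tgt e = b}

theorem sum_filter_tgt_eq (f : G.V → ℤ) (v : G.V) :
    ∑ e ∈ univ.filter (fun e => G.tgt e = v), f (G.src e) = ∑ u, G.mult u v * f u := by
  rw [← sum_fiberwise _ G.src]
  refine sum_congr rfl fun u _ => ?_
  rw [sum_congr rfl fun e he => by rw [(mem_filter.1 he).2], sum_const, filter_filter,
    nsmul_eq_mul, mult]
  simp only [and_comm]

theorem sum_filter_src_eq (f : G.V → ℤ) (v : G.V) :
    ∑ e ∈ univ.filter (fun e => G.src e = v), f (G.tgt e) = ∑ u, G.mult v u * f u := by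
  rw [← sum_fiberwise _ G.tgt]
  refine sum_congr rfl fun u _ => ?_
  rw [sum_congr rfl fun e he => by rw [(mem_filter.1 he).2], sum_const, filter_filter,
    nsmul_eq_mul, mult]

theorem Ind_eq_sum_mult (v : G.V) :
    G.Ind v = ∑ u, G.w u * ((G.mult u v : ℤ) - G.mult v u) := by
  simp only [Ind, sum_filter_tgt_eq, sum_filter_src_eq, ← sum_sub_distrib]
  exact sum_congr rfl fun u _ => by ring

theorem mult_deletePair (a b : G.V) (x y : (G.deletePair a b).V) :
    (G.deletePair a b).mult x y = G.mult x.1 y.1 := by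
  refine card_bij (fun e _ => e.1) ?_ (fun _ _ _ _ h => Subtype.ext h) ?_
  · intro e he
    rw [mem_filter] at he ⊢
    exact ⟨mem_univ _, congrArg Subtype.val he.2.1, congrArg Subtype.val he.2.2⟩
  · intro e he
    obtain ⟨hs, ht⟩ := (mem_filter.1 he).2
    refine ⟨⟨e, hs ▸ x.2.1, hs ▸ x.2.2, ht ▸ y.2.1, ht ▸ y.2.2⟩, ?_, rfl⟩
    exact mem_filter.2 ⟨mem_univ _, Subtype.ext hs, Subtype.ext ht⟩

variable {G} {a b : G.V}

theorem Ind_eq_of_mult_eq (hout : ∀ u, G.mult a u = G.mult b u)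
    (hin : ∀ u, G.mult u a = G.mult u b) : G.Ind a = G.Ind b := by
  simp only [Ind_eq_sum_mult, hout, hin]

theorem Ind_deletePair_of_mult_eq (hab : a ≠ b) (hw : G.w a + G.w b = 0)
    (hout : ∀ u, G.mult a u = G.mult b u) (hin : ∀ u, G.mult u a = G.mult u b)
    (x : (G.deletePair a b).V) : (G.deletePair a b).Ind x = G.Ind x.1 := by
  rw [Ind_eq_sum_mult, Ind_eq_sum_mult, Fintype.sum_eq_add_add_sum_subtype_ne hab]
  simp only [mult_deletePair, hout, hin]
  rw [← add_mul, hw, zero_mul, zero_add]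
  rfl

theorem P_deletePair_of_mult_eq (hab : a ≠ b) (hw : G.w a + G.w b = 0)
    (hout : ∀ u, G.mult a u = G.mult b u) (hin : ∀ u, G.mult u a = G.mult u b) :
    (G.deletePair a b).P = G.P := by
  simp only [P, Fintype.sum_eq_add_add_sum_subtype_ne hab, Ind_eq_of_mult_eq hout hin,
    Ind_deletePair_of_mult_eq hab hw hout hin]
  rw [← add_mul, ← map_add, hw, map_zero, zero_mul, zero_add, zero_add]
  rfl

end SDGraph

/-- The move `ω₂`: if `v₊, v₋` are vertices with `w(v₊) = +1`, `w(v₋) = −1`, not joined to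
each other, and there is a bijection between the edges incident to `v₊` and those incident
to `v₋` preserving the other endpoint and the direction, then deleting `v₊, v₋` and all
their incident edges leaves the graph polynomial unchanged. -/
theorem graphPolynomial_omega_two (G : SDGraph) (vp vm : G.V) (hne : vp ≠ vm)
    (hwp : G.w vp = 1) (hwm : G.w vm = -1)
    (hsep : ∀ e, ¬ ((G.src e = vp ∧ G.tgt e = vm) ∨ (G.src e = vm ∧ G.tgt e = vp)))
    (φ : G.Inc vp ≃ G.Inc vm)
    (hφ : ∀ e : G.Inc vp,
      (G.src e.val = vp → G.src (φ e).val = vm ∧ G.tgt (φ e).val = G.tgt e.val) ∧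
      (G.tgt e.val = vp → G.tgt (φ e).val = vm ∧ G.src (φ e).val = G.src e.val)) :
    (G.deletePair vp vm).P = G.P := by
  -- `hsep` is what stops `φ` from matching an edge at `v₊` with one of the other direction at `v₋`.
  have hout : ∀ u, G.mult vp u = G.mult vm u := fun u =>
    card_filter_eq_of_subtypeEquiv φ (fun _ h => .inl h.1) (fun _ h => .inl h.1) fun e => by
      refine ⟨fun h => ⟨((hφ e).1 h.1).1, ((hφ e).1 h.1).2.trans h.2⟩, fun h => ?_⟩
      rcases e.2 with he | he
      · exact ⟨he, ((hφ e).1 he).2.symm.trans h.2⟩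
      · exact (hsep e (.inr ⟨((hφ e).2 he).2 ▸ h.1, he⟩)).elim
  have hin : ∀ u, G.mult u vp = G.mult u vm := fun u =>
    card_filter_eq_of_subtypeEquiv φ (fun _ h => .inr h.2) (fun _ h => .inr h.2) fun e => by
      refine ⟨fun h => ⟨((hφ e).2 h.2).2.trans h.1, ((hφ e).2 h.2).1⟩, fun h => ?_⟩
      rcases e.2 with he | he
      · exact (hsep e (.inl ⟨he, ((hφ e).1 he).2 ▸ h.2⟩)).elim
      · exact ⟨((hφ e).2 he).2.symm.trans h.1, he⟩
  exact SDGraph.P_deletePair_of_mult_eq hne (by rw [hwp, hwm]; rfl) hout hin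
end
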